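/- Let v : ℝ^m → ℍ be a measurable vector field (re (v x) = 0 for all x) with ∫ ‖v x‖² dx = 1, n a purely imaginary unit quaternion, α ∈ [0, π], q = exp((α/2) • n), C = ∫ star (q * v x * star q) * v x dx, and assume im C ≠ 0. Set φ = Real.arccos (re C / ‖C‖), m = ‖im C‖⁻¹ • im C, p = Real.cos (φ/2) + Real.sin (φ/2) • m, a = ∫ ‖v∥ x‖² dx and c = ‖∫ (v∥ x) * (v⊥ x) dx‖², where v⊥ x = ⟪v x, n⟫ • n and v∥ x = v x − v⊥ x. Then the squared norm of the bivector part of the composed rotor r = star p * q is ‖im r‖² = Real.sin (α/2)² * Real.cos (φ/2)² − Real.cos (φ/2) * Real.sin (φ/2) * Real.sin α ² * a / ‖im C‖ + Real.cos (α/2)² * Real.sin (φ/2)² * Real.sin α ² * a² / ‖im C‖² + 4 * Real.sin (α/2)² * Real.sin (φ/2)² * c / ‖im C‖². -/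

import Mathlib

/-!
Write `v = v∥ + λ n` with `λ = ⟪v, n⟫`. The rotor `q = cos (α/2) + sin (α/2) n` fixes `n` and
turns `v∥` into `cos α v∥ + sin α n v∥`, so pointwise
`im (star (q v q⋆) v) = sin α ‖v∥‖² n - sin α λ v∥ - (1 - cos α) n λ v∥`.
Integrating, `im C = (a sin α) n - sin α D - (1 - cos α) n D` with `D = ∫ λ v∥`, where `n`, `D`,
`n D` are mutually orthogonal and `‖n D‖² = ‖D‖² = c`. Hence `⟪im C, n⟫ = a sin α` and
`‖im C‖² = a² sin² α + 4 sin² (α/2) c`. As `p` and `q` are unit quaternions,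
`‖im (star p q)‖² = 1 - ⟪p, q⟫²` with `⟪p, q⟫ = cos (φ/2) cos (α/2) + sin (φ/2) sin (α/2) ⟪m, n⟫`,
and expanding gives the formula.
-/

open Quaternion MeasureTheory

noncomputable instance : MeasurableSpace ℍ[ℝ] := borel _
instance : BorelSpace ℍ[ℝ] := ⟨rfl⟩

theorem Real.sin_sq_add_one_sub_cos_sq (θ : ℝ) :
    Real.sin θ ^ 2 + (1 - Real.cos θ) ^ 2 = 4 * Real.sin (θ / 2) ^ 2 := by
  have h := Real.sin_sq_eq_half_sub (θ / 2)
  rw [mul_div_cancel₀ θ two_ne_zero] at h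
  linear_combination Real.sin_sq_add_cos_sq θ - 4 * h

theorem MeasureTheory.Integrable.comp_of_norm_le_norm_sq {X E F : Type*} [MeasurableSpace X]
    {μ : Measure X} [NormedAddCommGroup E] [NormedAddCommGroup F] {v : X → E} {g : E → F}
    (h2 : Integrable (fun x => ‖v x‖ ^ 2) μ) (hv : AEStronglyMeasurable v μ) (hg : Continuous g)
    (hgv : ∀ w, ‖g w‖ ≤ ‖w‖ ^ 2) : Integrable (fun x => g (v x)) μ :=
  h2.mono' (hg.comp_aestronglyMeasurable hv) (ae_of_all _ fun x => hgv (v x))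

theorem inner_integral_eq_zero_of_forall {X E : Type*} [MeasurableSpace X] {μ : Measure X}
    [NormedAddCommGroup E] [InnerProductSpace ℝ E] [CompleteSpace E] {f : X → E} {c : E}
    (h : ∀ x, inner ℝ c (f x) = 0) : inner ℝ c (∫ x, f x ∂μ) = 0 := by
  by_cases hf : Integrable f μ
  · rw [← integral_inner hf]
    simp [h]
  · rw [integral_undef hf, inner_zero_right]

namespace Quaternion

theorem norm_sq_eq_re_sq_add_norm_im_sq (a : ℍ[ℝ]) : ‖a‖ ^ 2 = a.re ^ 2 + ‖a.im‖ ^ 2 := by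
  simp only [sq, ← normSq_eq_norm_mul_self, normSq_def', re_im, imI_im, imJ_im, imK_im]
  ring

theorem im_eq_self_of_re_eq_zero {a : ℍ[ℝ]} (ha : a.re = 0) : a.im = a := by
  rw [← sub_re_self, ha, coe_zero, sub_zero]

theorem inner_one_left (a : ℍ[ℝ]) : inner ℝ 1 a = a.re := by
  rw [inner_def, one_mul, re_star]

theorem re_star_mul (p q : ℍ[ℝ]) : (star p * q).re = inner ℝ p q := by
  simp [inner_def, re_mul]

theorem re_mul_eq_neg_inner {a b : ℍ[ℝ]} (hb : b.re = 0) : (a * b).re = -inner ℝ a b := by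
  rw [inner_def, star_eq_neg.2 hb, mul_neg, re_neg, neg_neg]

theorem mul_self_of_re_eq_zero {a : ℍ[ℝ]} (ha : a.re = 0) : a * a = -↑(‖a‖ ^ 2) := by
  rw [← sq, sq_eq_neg_normSq.2 ha, sq, normSq_eq_norm_mul_self]

section Pure

variable {a b : ℍ[ℝ]}

theorem mul_comm_eq_neg_of_inner_eq_zero (ha : a.re = 0) (hb : b.re = 0)
    (hab : inner ℝ a b = 0) : a * b = -(b * a) := by
  rw [inner_def] at hab
  ext <;> simp [star_eq_neg.2 hb, re_mul, imI_mul, imJ_mul, imK_mul, ha, hb] at hab ⊢ <;> linarith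

theorem star_mul_eq_neg_of_inner_eq_zero (ha : a.re = 0) (hb : b.re = 0)
    (hab : inner ℝ b a = 0) : star (a * b) = -(a * b) := by
  rw [star_mul, star_eq_neg.2 hb, star_eq_neg.2 ha, neg_mul_neg,
    mul_comm_eq_neg_of_inner_eq_zero hb ha hab]

theorem inner_mul_right_self_eq_zero (ha : a.re = 0) (hb : b.re = 0) :
    inner ℝ a (a * b) = 0 := by
  simp [inner_def, re_mul, imI_mul, imJ_mul, imK_mul, ha, hb]
  ring

theorem inner_mul_left_self_eq_zero (ha : a.re = 0) (hb : b.re = 0) :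
    inner ℝ b (a * b) = 0 := by
  simp [inner_def, re_mul, imI_mul, imJ_mul, imK_mul, ha, hb]
  ring

theorem norm_sq_coe_add_smul (hb : b.re = 0) (x y : ℝ) :
    ‖(x : ℍ[ℝ]) + y • b‖ ^ 2 = x ^ 2 + y ^ 2 * ‖b‖ ^ 2 := by
  rw [norm_sq_eq_re_sq_add_norm_im_sq]
  simp [hb, norm_smul, mul_pow, im_eq_self_of_re_eq_zero]

theorem inner_coe_add_smul (ha : a.re = 0) (hb : b.re = 0) (x y z w : ℝ) :
    inner ℝ ((x : ℍ[ℝ]) + y • a) ((z : ℍ[ℝ]) + w • b) = x * z + y * w * inner ℝ a b := by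
  simp only [inner_add_left, inner_add_right, real_inner_smul_left, real_inner_smul_right]
  simp [inner_def, ha, hb, re_mul]
  ring

end Pure

theorem norm_im_star_mul_sq {p q : ℍ[ℝ]} (hp : ‖p‖ = 1) (hq : ‖q‖ = 1) :
    ‖(star p * q).im‖ ^ 2 = 1 - inner ℝ p q ^ 2 := by
  have h := norm_sq_eq_re_sq_add_norm_im_sq (star p * q)
  rw [norm_mul, norm_star, hp, hq, re_star_mul] at h
  linarith

section Frame

variable {n d : ℍ[ℝ]}

theorem inner_smul_sub_smul_sub_smul_mul_right (hn_re : n.re = 0) (hn : ‖n‖ = 1)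
    (hd_re : d.re = 0) (hdn : inner ℝ d n = 0) (x y z : ℝ) :
    inner ℝ (x • n - y • d - z • (n * d)) n = x := by
  have hnd : inner ℝ n d = 0 := by rwa [real_inner_comm]
  rw [real_inner_comm]
  simp only [inner_sub_right, real_inner_smul_right, real_inner_self_eq_norm_sq, hn, hnd,
    inner_mul_right_self_eq_zero hn_re hd_re]
  ring

theorem norm_sq_smul_sub_smul_sub_smul_mul (hn_re : n.re = 0) (hn : ‖n‖ = 1)
    (hd_re : d.re = 0) (hdn : inner ℝ d n = 0) (x y z : ℝ) :
    ‖x • n - y • d - z • (n * d)‖ ^ 2 = x ^ 2 + (y ^ 2 + z ^ 2) * ‖d‖ ^ 2 := by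
  have hnd : inner ℝ n d = 0 := by rwa [real_inner_comm]
  rw [← real_inner_self_eq_norm_sq]
  simp only [inner_sub_left, inner_sub_right, real_inner_smul_left, real_inner_smul_right,
    real_inner_self_eq_norm_sq, hdn, hnd, inner_mul_right_self_eq_zero hn_re hd_re,
    inner_mul_left_self_eq_zero hn_re hd_re, real_inner_comm _ (n * d)]
  simp only [norm_smul, norm_mul, hn, mul_pow, Real.norm_eq_abs, sq_abs]
  ring

end Frame

noncomputable def rotor (n : ℍ[ℝ]) (θ : ℝ) : ℍ[ℝ] := ↑(Real.cos (θ / 2)) + Real.sin (θ / 2) • n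

section Rotor

variable {n u : ℍ[ℝ]}

theorem exp_half_smul_eq_rotor (hn_re : n.re = 0) (hn : ‖n‖ = 1) (θ : ℝ) :
    NormedSpace.exp ((θ / 2) • n) = rotor n θ := by
  rw [exp_of_re_eq_zero _ (by simp [hn_re]), norm_smul, hn, mul_one, Real.norm_eq_abs, smul_smul]
  rcases abs_choice (θ / 2) with h | h <;> rcases eq_or_ne (θ / 2) 0 with h0 | h0 <;>
    simp [rotor, h, h0]

theorem norm_rotor (hn_re : n.re = 0) (hn : ‖n‖ = 1) (θ : ℝ) : ‖rotor n θ‖ = 1 := by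
  rw [← pow_eq_one_iff_of_nonneg (norm_nonneg _) two_ne_zero, rotor, norm_sq_coe_add_smul hn_re,
    hn, one_pow, mul_one, Real.cos_sq_add_sin_sq]

theorem rotor_mul_self_mul_star (hn_re : n.re = 0) (hn : ‖n‖ = 1) (θ : ℝ) :
    rotor n θ * n * star (rotor n θ) = n := by
  have hcomm : rotor n θ * n = n * rotor n θ := by
    simp only [rotor, add_mul, mul_add, smul_mul_assoc, mul_smul_comm, coe_mul_eq_smul,
      mul_coe_eq_smul]
  rw [hcomm, mul_assoc, self_mul_star, normSq_eq_norm_mul_self, norm_rotor hn_re hn, mul_one,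
    coe_one, mul_one]

theorem rotor_mul_mul_star_of_inner_eq_zero (hn_re : n.re = 0) (hn : ‖n‖ = 1)
    (hu_re : u.re = 0) (hun : inner ℝ u n = 0) (θ : ℝ) :
    rotor n θ * u * star (rotor n θ) = Real.cos θ • u + Real.sin θ • (n * u) := by
  have hnn : n * n = -1 := by rw [mul_self_of_re_eq_zero hn_re, hn]; simp
  have hnnu : n * (n * u) = -u := by rw [← mul_assoc, hnn, neg_one_mul]
  have hcos : Real.cos θ = Real.cos (θ / 2) ^ 2 - Real.sin (θ / 2) ^ 2 := by
    rw [← Real.cos_two_mul']; ring_nf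
  have hsin : Real.sin θ = 2 * Real.sin (θ / 2) * Real.cos (θ / 2) := by
    rw [← Real.sin_two_mul]; ring_nf
  rw [rotor, star_add, star_coe, star_smul, star_eq_neg.2 hn_re, hcos, hsin]
  simp only [add_mul, mul_add, smul_mul_assoc, mul_smul_comm, mul_assoc, coe_mul_eq_smul,
    mul_coe_eq_smul, mul_comm_eq_neg_of_inner_eq_zero hu_re hn_re hun, hnnu, mul_neg, smul_neg,
    neg_neg]
  module

theorem star_rotor_conj_mul (hn_re : n.re = 0) (hn : ‖n‖ = 1) (hu_re : u.re = 0)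
    (hun : inner ℝ u n = 0) (θ l : ℝ) :
    star (rotor n θ * (u + l • n) * star (rotor n θ)) * (u + l • n)
      = ↑(Real.cos θ * ‖u‖ ^ 2 + l ^ 2) + (Real.sin θ * ‖u‖ ^ 2) • n
        - Real.sin θ • (l • u) - (1 - Real.cos θ) • (n * (l • u)) := by
  have hnn : n * n = -1 := by rw [mul_self_of_re_eq_zero hn_re, hn]; simp
  have hnnu : n * (n * u) = -u := by rw [← mul_assoc, hnn, neg_one_mul]
  have hcoe (r : ℝ) : (r : ℍ[ℝ]) = r • 1 := by rw [← coe_mul_eq_smul, mul_one]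
  rw [mul_add (rotor n θ), add_mul, mul_smul_comm, smul_mul_assoc,
    rotor_mul_mul_star_of_inner_eq_zero hn_re hn hu_re hun, rotor_mul_self_mul_star hn_re hn]
  simp only [star_add, star_smul, star_eq_neg.2 hu_re, star_eq_neg.2 hn_re,
    star_mul_eq_neg_of_inner_eq_zero hn_re hu_re hun]
  simp only [add_mul, mul_add, smul_mul_assoc, mul_smul_comm, mul_assoc, neg_mul, mul_neg,
    mul_self_of_re_eq_zero hu_re, hnn, hnnu, mul_comm_eq_neg_of_inner_eq_zero hu_re hn_re hun,
    neg_neg, smul_neg, hcoe, mul_one]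
  module

theorem norm_star_rotor_conj_mul (hn_re : n.re = 0) (hn : ‖n‖ = 1) (θ : ℝ) (w : ℍ[ℝ]) :
    ‖star (rotor n θ * w * star (rotor n θ)) * w‖ = ‖w‖ ^ 2 := by
  rw [norm_mul, norm_star, norm_mul, norm_mul, norm_star, norm_rotor hn_re hn]
  ring

end Rotor

noncomputable def imCLM : ℍ[ℝ] →L[ℝ] ℍ[ℝ] :=
  LinearMap.toContinuousLinearMap
    { toFun := im, map_add' := im_add, map_smul' := fun r a => im_smul a r }

theorem imCLM_apply (a : ℍ[ℝ]) : imCLM a = a.im := rfl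

theorem integral_im {X : Type*} [MeasurableSpace X] {μ : Measure X} {f : X → ℍ[ℝ]}
    (hf : Integrable f μ) : ∫ x, (f x).im ∂μ = (∫ x, f x ∂μ).im := by
  simpa only [imCLM_apply] using imCLM.integral_comp_comm hf

/-- The component `v∥` of `w` in the rotation plane with axis `n`. -/
noncomputable def planePart (n w : ℍ[ℝ]) : ℍ[ℝ] := w - inner ℝ w n • n

section PlanePart

variable {n w : ℍ[ℝ]}

theorem continuous_planePart (n : ℍ[ℝ]) : Continuous (planePart n) := by
  unfold planePart
  fun_prop

theorem planePart_add_inner_smul (n w : ℍ[ℝ]) : planePart n w + inner ℝ w n • n = w :=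
  sub_add_cancel _ _

theorem re_planePart (hn_re : n.re = 0) (hw : w.re = 0) : (planePart n w).re = 0 := by
  simp [planePart, hn_re, hw]

theorem inner_planePart_left (hn : ‖n‖ = 1) (w : ℍ[ℝ]) : inner ℝ (planePart n w) n = 0 := by
  rw [planePart, inner_sub_left, real_inner_smul_left, real_inner_self_eq_norm_sq, hn]
  ring

theorem norm_planePart_le (hn : ‖n‖ = 1) (w : ℍ[ℝ]) : ‖planePart n w‖ ≤ ‖w‖ := by
  have h := norm_add_sq_real (planePart n w) (inner ℝ w n • n)
  rw [planePart_add_inner_smul, real_inner_smul_right, inner_planePart_left hn] at h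
  refine le_of_sq_le_sq ?_ (norm_nonneg _)
  nlinarith [sq_nonneg ‖inner ℝ w n • n‖]

theorem im_star_rotor_conj_mul (hn_re : n.re = 0) (hn : ‖n‖ = 1) (hw : w.re = 0) (θ : ℝ) :
    (star (rotor n θ * w * star (rotor n θ)) * w).im
      = (Real.sin θ * ‖planePart n w‖ ^ 2) • n - Real.sin θ • (inner ℝ w n • planePart n w)
        - (1 - Real.cos θ) • (n * (inner ℝ w n • planePart n w)) := by
  have hu_re := re_planePart hn_re hw
  have hun := inner_planePart_left hn w
  have hnu_re : (n * planePart n w).re = 0 := by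
    rw [re_mul_eq_neg_inner hu_re, real_inner_comm, hun, neg_zero]
  rw [← planePart_add_inner_smul n w, star_rotor_conj_mul hn_re hn hu_re hun,
    planePart_add_inner_smul, im_sub, im_sub, im_add, im_coe, zero_add]
  simp only [im_smul, mul_smul_comm, im_eq_self_of_re_eq_zero, hn_re, hu_re, hnu_re]

end PlanePart

noncomputable def mixedMoment {X : Type*} [MeasurableSpace X] (μ : Measure X) (n : ℍ[ℝ])
    (v : X → ℍ[ℝ]) : ℍ[ℝ] :=
  ∫ x, inner ℝ (v x) n • planePart n (v x) ∂μ

section Correlation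

variable {X : Type*} [MeasurableSpace X] {μ : Measure X} {v : X → ℍ[ℝ]} {n : ℍ[ℝ]}

theorem integrable_inner_smul_planePart (hv : AEStronglyMeasurable v μ)
    (h2 : Integrable (fun x => ‖v x‖ ^ 2) μ) (hn : ‖n‖ = 1) :
    Integrable (fun x => inner ℝ (v x) n • planePart n (v x)) μ := by
  refine h2.comp_of_norm_le_norm_sq (g := fun w => inner ℝ w n • planePart n w) hv
    (by have := continuous_planePart n; fun_prop) fun w => ?_
  rw [norm_smul, sq]
  refine mul_le_mul ?_ (norm_planePart_le hn w) (norm_nonneg _) (norm_nonneg _)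
  simpa [hn] using abs_real_inner_le_norm w n

theorem re_mixedMoment (hre : ∀ x, (v x).re = 0) (hn_re : n.re = 0) :
    (mixedMoment μ n v).re = 0 := by
  rw [← inner_one_left]
  refine inner_integral_eq_zero_of_forall fun x => ?_
  rw [inner_one_left, re_smul, re_planePart hn_re (hre x), smul_zero]

theorem inner_mixedMoment_left (hn : ‖n‖ = 1) : inner ℝ (mixedMoment μ n v) n = 0 := by
  rw [real_inner_comm]
  refine inner_integral_eq_zero_of_forall fun x => ?_
  rw [real_inner_smul_right, real_inner_comm _ n, inner_planePart_left hn, mul_zero]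

theorem integral_planePart_mul_inner_smul (hv : AEStronglyMeasurable v μ)
    (h2 : Integrable (fun x => ‖v x‖ ^ 2) μ) (hn : ‖n‖ = 1) :
    ∫ x, planePart n (v x) * (inner ℝ (v x) n • n) ∂μ = mixedMoment μ n v * n := by
  simp_rw [mul_smul_comm, ← smul_mul_assoc]
  exact integral_mul_const_of_integrable (integrable_inner_smul_planePart hv h2 hn)

theorem im_integral_star_rotor_conj_mul (hv : AEStronglyMeasurable v μ) (hre : ∀ x, (v x).re = 0)
    (h2 : Integrable (fun x => ‖v x‖ ^ 2) μ) (hn_re : n.re = 0) (hn : ‖n‖ = 1) (θ : ℝ) :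
    (∫ x, star (rotor n θ * v x * star (rotor n θ)) * v x ∂μ).im
      = (Real.sin θ * ∫ x, ‖planePart n (v x)‖ ^ 2 ∂μ) • n - Real.sin θ • mixedMoment μ n v
        - (1 - Real.cos θ) • (n * mixedMoment μ n v) := by
  have hf : Integrable (fun x => star (rotor n θ * v x * star (rotor n θ)) * v x) μ :=
    h2.comp_of_norm_le_norm_sq (g := fun w => star (rotor n θ * w * star (rotor n θ)) * w) hv
      (((continuous_const.mul continuous_id).mul continuous_const).star.mul continuous_id)
      fun w => (norm_star_rotor_conj_mul hn_re hn θ w).le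
  have hu2 : Integrable (fun x => ‖planePart n (v x)‖ ^ 2) μ := by
    refine h2.comp_of_norm_le_norm_sq (g := fun w => ‖planePart n w‖ ^ 2) hv
      ((continuous_planePart n).norm.pow 2) fun w => ?_
    rw [norm_pow, norm_norm]
    exact pow_le_pow_left₀ (norm_nonneg _) (norm_planePart_le hn w) 2
  have hD := integrable_inner_smul_planePart hv h2 hn
  rw [← integral_im hf,
    integral_congr_ae (ae_of_all _ fun x => im_star_rotor_conj_mul hn_re hn (hre x) θ),
    integral_sub, integral_sub, integral_smul_const, integral_const_mul, integral_smul,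
    integral_smul, integral_const_mul_of_integrable hD, mixedMoment]
  · exact (hu2.const_mul _).smul_const n
  · exact hD.smul (Real.sin θ)
  · exact ((hu2.const_mul _).smul_const n).sub (hD.smul (Real.sin θ))
  · exact (hD.const_mul n).smul (1 - Real.cos θ)

theorem inner_im_integral_star_rotor_conj_mul (hv : AEStronglyMeasurable v μ)
    (hre : ∀ x, (v x).re = 0) (h2 : Integrable (fun x => ‖v x‖ ^ 2) μ) (hn_re : n.re = 0)
    (hn : ‖n‖ = 1) (θ : ℝ) :
    inner ℝ (∫ x, star (rotor n θ * v x * star (rotor n θ)) * v x ∂μ).im n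
      = Real.sin θ * ∫ x, ‖planePart n (v x)‖ ^ 2 ∂μ := by
  rw [im_integral_star_rotor_conj_mul hv hre h2 hn_re hn,
    inner_smul_sub_smul_sub_smul_mul_right hn_re hn (re_mixedMoment hre hn_re)
      (inner_mixedMoment_left hn)]

theorem norm_sq_im_integral_star_rotor_conj_mul (hv : AEStronglyMeasurable v μ)
    (hre : ∀ x, (v x).re = 0) (h2 : Integrable (fun x => ‖v x‖ ^ 2) μ) (hn_re : n.re = 0)
    (hn : ‖n‖ = 1) (θ : ℝ) :
    ‖(∫ x, star (rotor n θ * v x * star (rotor n θ)) * v x ∂μ).im‖ ^ 2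
      = Real.sin θ ^ 2 * (∫ x, ‖planePart n (v x)‖ ^ 2 ∂μ) ^ 2
        + 4 * Real.sin (θ / 2) ^ 2 * ‖mixedMoment μ n v‖ ^ 2 := by
  rw [im_integral_star_rotor_conj_mul hv hre h2 hn_re hn,
    norm_sq_smul_sub_smul_sub_smul_mul hn_re hn (re_mixedMoment hre hn_re)
      (inner_mixedMoment_left hn), ← Real.sin_sq_add_one_sub_cos_sq]
  ring

end Correlation

end Quaternion

theorem one_sub_sq_cos_mul_cos_add_sin_mul_sin_mul {α φ a c N : ℝ} (hN : N ≠ 0)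
    (hN2 : N ^ 2 = Real.sin α ^ 2 * a ^ 2 + 4 * Real.sin (α / 2) ^ 2 * c) :
    1 - (Real.cos (φ / 2) * Real.cos (α / 2)
        + Real.sin (φ / 2) * Real.sin (α / 2) * (N⁻¹ * (Real.sin α * a))) ^ 2
      = Real.sin (α / 2) ^ 2 * Real.cos (φ / 2) ^ 2
        - Real.cos (φ / 2) * Real.sin (φ / 2) * Real.sin α ^ 2 * a / N
        + Real.cos (α / 2) ^ 2 * Real.sin (φ / 2) ^ 2 * Real.sin α ^ 2 * a ^ 2 / N ^ 2
        + 4 * Real.sin (α / 2) ^ 2 * Real.sin (φ / 2) ^ 2 * c / N ^ 2 := by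
  have hsin : Real.sin α = 2 * Real.sin (α / 2) * Real.cos (α / 2) := by
    rw [← Real.sin_two_mul]; ring_nf
  rw [hsin] at hN2 ⊢
  field_simp
  linear_combination (-N ^ 2) * Real.cos_sq_add_sin_sq (φ / 2) + Real.sin (φ / 2) ^ 2 * hN2
    - (Real.cos (φ / 2) ^ 2 * N ^ 2
      + 4 * Real.cos (α / 2) ^ 2 * Real.sin (φ / 2) ^ 2 * Real.sin (α / 2) ^ 2 * a ^ 2)
      * Real.cos_sq_add_sin_sq (α / 2)

theorem composed_rotor_bivector_norm_sq_general
    {m : ℕ} (v : EuclideanSpace ℝ (Fin m) → ℍ[ℝ])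
    (hmeas : Measurable v)
    (hre : ∀ x, (v x).re = 0)
    (hnorm : ∫ x, ‖v x‖ ^ 2 = 1)
    (n : ℍ[ℝ]) (hn_re : n.re = 0) (hn_norm : ‖n‖ = 1)
    (α : ℝ)
    (q C : ℍ[ℝ])
    (hq : q = NormedSpace.exp ((α / 2) • n))
    (hC : C = ∫ x, star (q * v x * star q) * v x)
    (him : C.im ≠ 0)
    (φ : ℝ)
    (p : ℍ[ℝ])
    (hp : p = ((Real.cos (φ / 2) : ℝ) : ℍ[ℝ])
        + Real.sin (φ / 2) • (‖C.im‖⁻¹ • C.im))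
    (a c : ℝ)
    (ha : a = ∫ x, ‖v x - (inner ℝ (v x) n : ℝ) • n‖ ^ 2)
    (hc : c = ‖∫ x, (v x - (inner ℝ (v x) n : ℝ) • n) * ((inner ℝ (v x) n : ℝ) • n)‖ ^ 2) :
    ‖(star p * q).im‖ ^ 2 =
      Real.sin (α / 2) ^ 2 * Real.cos (φ / 2) ^ 2
        - Real.cos (φ / 2) * Real.sin (φ / 2) * Real.sin α ^ 2 * a / ‖C.im‖
        + Real.cos (α / 2) ^ 2 * Real.sin (φ / 2) ^ 2 * Real.sin α ^ 2 * a ^ 2 / ‖C.im‖ ^ 2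
        + 4 * Real.sin (α / 2) ^ 2 * Real.sin (φ / 2) ^ 2 * c / ‖C.im‖ ^ 2 := by
  change a = ∫ x, ‖planePart n (v x)‖ ^ 2 at ha
  change c = ‖∫ x, planePart n (v x) * (inner ℝ (v x) n • n)‖ ^ 2 at hc
  have h2 : Integrable (fun x => ‖v x‖ ^ 2) := .of_integral_ne_zero (hnorm ▸ one_ne_zero)
  have hv := hmeas.aestronglyMeasurable (μ := volume)
  have hq' : q = rotor n α := hq.trans (exp_half_smul_eq_rotor hn_re hn_norm α)
  rw [hq'] at hC
  have hc' : c = ‖mixedMoment volume n v‖ ^ 2 := by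
    rw [hc, integral_planePart_mul_inner_smul hv h2 hn_norm, norm_mul, hn_norm, mul_one]
  have hN2 : ‖C.im‖ ^ 2 = Real.sin α ^ 2 * a ^ 2 + 4 * Real.sin (α / 2) ^ 2 * c := by
    rw [hC, norm_sq_im_integral_star_rotor_conj_mul hv hre h2 hn_re hn_norm, ha, hc']
  have hCn : inner ℝ C.im n = Real.sin α * a := by
    rw [hC, inner_im_integral_star_rotor_conj_mul hv hre h2 hn_re hn_norm, ha]
  have hm_re : (‖C.im‖⁻¹ • C.im).re = 0 := by simp
  have hm : ‖‖C.im‖⁻¹ • C.im‖ = 1 := by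
    rw [norm_smul, norm_inv, norm_norm, inv_mul_cancel₀ (norm_ne_zero_iff.2 him)]
  have hp' : p = rotor (‖C.im‖⁻¹ • C.im) φ := hp
  rw [norm_im_star_mul_sq (hp' ▸ norm_rotor hm_re hm φ) (hq' ▸ norm_rotor hn_re hn_norm α), hp',
    hq', rotor, rotor, inner_coe_add_smul hm_re hn_re, real_inner_smul_left, hCn]
  exact one_sub_sq_cos_mul_cos_add_sin_mul_sin_mul (norm_ne_zero_iff.2 him) hN2

theorem composed_rotor_bivector_norm_sq
    {m : ℕ} (v : EuclideanSpace ℝ (Fin m) → ℍ[ℝ])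
    (hmeas : Measurable v)
    (hre : ∀ x, (v x).re = 0)
    (hnorm : ∫ x, ‖v x‖ ^ 2 = 1)
    (n : ℍ[ℝ]) (hn_re : n.re = 0) (hn_norm : ‖n‖ = 1)
    (α : ℝ) (hα0 : 0 ≤ α) (hαπ : α ≤ Real.pi)
    (q C : ℍ[ℝ])
    (hq : q = NormedSpace.exp ((α / 2) • n))
    (hC : C = ∫ x, star (q * v x * star q) * v x)
    (him : C.im ≠ 0)
    (φ : ℝ) (hφ : φ = Real.arccos (C.re / ‖C‖))
    (p : ℍ[ℝ])
    (hp : p = ((Real.cos (φ / 2) : ℝ) : ℍ[ℝ])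
        + Real.sin (φ / 2) • (‖C.im‖⁻¹ • C.im))
    (a c : ℝ)
    (ha : a = ∫ x, ‖v x - (inner ℝ (v x) n : ℝ) • n‖ ^ 2)
    (hc : c = ‖∫ x, (v x - (inner ℝ (v x) n : ℝ) • n) * ((inner ℝ (v x) n : ℝ) • n)‖ ^ 2) :
    ‖(star p * q).im‖ ^ 2 =
      Real.sin (α / 2) ^ 2 * Real.cos (φ / 2) ^ 2
        - Real.cos (φ / 2) * Real.sin (φ / 2) * Real.sin α ^ 2 * a / ‖C.im‖
        + Real.cos (α / 2) ^ 2 * Real.sin (φ / 2) ^ 2 * Real.sin α ^ 2 * a ^ 2 / ‖C.im‖ ^ 2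
        + 4 * Real.sin (α / 2) ^ 2 * Real.sin (φ / 2) ^ 2 * c / ‖C.im‖ ^ 2 :=
  composed_rotor_bivector_norm_sq_general v hmeas hre hnorm n hn_re hn_norm α q C hq hC him φ p hp a
    c ha hc
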